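/- For 0 < μ < μ' < 1, the Chernoff information satisfies D*(μ, μ') ≥ min_{x ∈ [μ, μ']} (D(x,μ) + D(x,μ'))/2, and this minimum equals −log( √(μ·μ') + √((1−μ)·(1−μ')) ); in particular D*(μ, μ') ≥ −log( √(μ·μ') + √((1−μ)·(1−μ')) ). -/

import Mathlib

/-!
Write `BC = √(μμ') + √((1-μ)(1-μ'))` and `p = √(μμ') / BC`. Taking logarithms, the average
`(D(z,μ) + D(z,μ'))/2` equals `D(z,p) - log BC` for every `z ∈ (0,1)`, so by Gibbs' inequality it
is at least `-log BC`, with equality at `z = p`, which lies in `[μ, μ']`. The Chernoff information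
is an infimum of maxima, each of which dominates the corresponding average.
-/

open Set

/-- KL divergence between Bernoulli(p) and Bernoulli(q) (real-valued formula,
valid when `q ∈ (0,1)`). -/
noncomputable def klBerR (p q : ℝ) : ℝ :=
  p * Real.log (p / q) + (1 - p) * Real.log ((1 - p) / (1 - q))

/-- Chernoff information between Bernoulli(x) and Bernoulli(y) for `0 < x < y < 1`. -/
noncomputable def chernoffR (x y : ℝ) : ℝ :=
  ⨅ z : Set.Ioo (0:ℝ) 1, max (klBerR z x) (klBerR z y)

open Real InformationTheory

lemma klBerR_eq_klFun {p : ℝ} (hp0 : p ≠ 0) (hp1 : p ≠ 1) (x : ℝ) :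
    klBerR x p = p * klFun (x / p) + (1 - p) * klFun ((1 - x) / (1 - p)) := by
  have : 1 - p ≠ 0 := sub_ne_zero.mpr hp1.symm
  unfold klBerR klFun
  field_simp
  ring

lemma klBerR_nonneg {x p : ℝ} (hx0 : 0 ≤ x) (hx1 : x ≤ 1) (hp0 : 0 < p) (hp1 : p < 1) :
    0 ≤ klBerR x p := by
  rw [klBerR_eq_klFun hp0.ne' hp1.ne]
  have h1p : 0 < 1 - p := sub_pos.mpr hp1
  have := klFun_nonneg (div_nonneg hx0 hp0.le)
  have := klFun_nonneg (div_nonneg (sub_nonneg.mpr hx1) h1p.le)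
  positivity

lemma klBerR_self (p : ℝ) : klBerR p p = 0 := by
  simp [klBerR]

noncomputable def bhattacharyyaCoeff (q q' : ℝ) : ℝ :=
  √(q * q') + √((1 - q) * (1 - q'))

noncomputable def bhattacharyyaPoint (q q' : ℝ) : ℝ :=
  √(q * q') / bhattacharyyaCoeff q q'

section Bhattacharyya

variable {q q' : ℝ}

lemma bhattacharyyaCoeff_pos (hq : 0 < q) (hq' : 0 < q') : 0 < bhattacharyyaCoeff q q' := by
  unfold bhattacharyyaCoeff
  have := sqrt_pos.mpr (mul_pos hq hq')
  positivity

lemma one_sub_bhattacharyyaPoint (hq : 0 < q) (hq' : 0 < q') :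
    1 - bhattacharyyaPoint q q' = √((1 - q) * (1 - q')) / bhattacharyyaCoeff q q' := by
  have := (bhattacharyyaCoeff_pos hq hq').ne'
  rw [bhattacharyyaPoint, eq_div_iff this, sub_mul, div_mul_cancel₀ _ this, bhattacharyyaCoeff]
  ring

lemma bhattacharyyaPoint_pos (hq : 0 < q) (hq' : 0 < q') : 0 < bhattacharyyaPoint q q' :=
  div_pos (sqrt_pos.mpr (mul_pos hq hq')) (bhattacharyyaCoeff_pos hq hq')

lemma bhattacharyyaPoint_lt_one (hq : 0 < q) (hq' : 0 < q') (hq1 : q < 1) (hq'1 : q' < 1) :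
    bhattacharyyaPoint q q' < 1 := by
  have := div_pos (sqrt_pos.mpr (mul_pos (sub_pos.mpr hq1) (sub_pos.mpr hq'1)))
    (bhattacharyyaCoeff_pos hq hq')
  rw [← one_sub_bhattacharyyaPoint hq hq'] at this
  linarith

lemma le_bhattacharyyaPoint (hq : 0 < q) (hqq' : q ≤ q') (hq' : q' ≤ 1) :
    q ≤ bhattacharyyaPoint q q' := by
  have h1q : 0 ≤ 1 - q := by linarith
  have ha := sq_sqrt (mul_pos hq (hq.trans_le hqq')).le
  have hb := sq_sqrt (mul_nonneg h1q (sub_nonneg.mpr hq'))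
  have key : q * √((1 - q) * (1 - q')) ≤ (1 - q) * √(q * q') := by
    refine (pow_le_pow_iff_left₀ (by positivity) (by positivity) two_ne_zero).mp ?_
    rw [mul_pow, mul_pow, ha, hb]
    nlinarith [mul_nonneg (mul_nonneg hq.le h1q) (sub_nonneg.mpr hqq')]
  rw [bhattacharyyaPoint, le_div_iff₀ (bhattacharyyaCoeff_pos hq (hq.trans_le hqq')),
    bhattacharyyaCoeff]
  linarith

lemma bhattacharyyaPoint_le (hq : 0 < q) (hqq' : q ≤ q') (hq' : q' ≤ 1) :
    bhattacharyyaPoint q q' ≤ q' := by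
  have hq'0 : 0 < q' := hq.trans_le hqq'
  have h1q' : 0 ≤ 1 - q' := by linarith
  have ha := sq_sqrt (mul_pos hq hq'0).le
  have hb := sq_sqrt (mul_nonneg (by linarith : 0 ≤ 1 - q) h1q')
  have key : (1 - q') * √(q * q') ≤ q' * √((1 - q) * (1 - q')) := by
    refine (pow_le_pow_iff_left₀ (by positivity) (by positivity) two_ne_zero).mp ?_
    rw [mul_pow, mul_pow, ha, hb]
    nlinarith [mul_nonneg (mul_nonneg hq'0.le h1q') (sub_nonneg.mpr hqq')]
  rw [bhattacharyyaPoint, div_le_iff₀ (bhattacharyyaCoeff_pos hq hq'0), bhattacharyyaCoeff]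
  linarith

lemma half_klBerR_add_klBerR {z : ℝ} (hz0 : 0 < z) (hz1 : z < 1)
    (hq0 : 0 < q) (hq1 : q < 1) (hq'0 : 0 < q') (hq'1 : q' < 1) :
    (klBerR z q + klBerR z q') / 2 =
      klBerR z (bhattacharyyaPoint q q') - log (bhattacharyyaCoeff q q') := by
  have hc := (bhattacharyyaCoeff_pos hq0 hq'0).ne'
  have h1z : 1 - z ≠ 0 := by linarith
  have h1q : 1 - q ≠ 0 := by linarith
  have h1q' : 1 - q' ≠ 0 := by linarith
  have log_point : log (bhattacharyyaPoint q q') =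
      (log q + log q') / 2 - log (bhattacharyyaCoeff q q') := by
    rw [bhattacharyyaPoint, log_div (sqrt_pos.mpr (mul_pos hq0 hq'0)).ne' hc,
      log_sqrt (mul_pos hq0 hq'0).le, log_mul hq0.ne' hq'0.ne']
  have log_one_sub_point : log (1 - bhattacharyyaPoint q q') =
      (log (1 - q) + log (1 - q')) / 2 - log (bhattacharyyaCoeff q q') := by
    have h := mul_pos (sub_pos.mpr hq1) (sub_pos.mpr hq'1)
    rw [one_sub_bhattacharyyaPoint hq0 hq'0, log_div (sqrt_pos.mpr h).ne' hc,
      log_sqrt h.le, log_mul h1q h1q']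
  unfold klBerR
  rw [log_div hz0.ne' hq0.ne', log_div hz0.ne' hq'0.ne', log_div h1z h1q, log_div h1z h1q',
    log_div hz0.ne' (bhattacharyyaPoint_pos hq0 hq'0).ne',
    log_div h1z (sub_pos.mpr (bhattacharyyaPoint_lt_one hq0 hq'0 hq1 hq'1)).ne',
    log_point, log_one_sub_point]
  ring

lemma neg_log_bhattacharyyaCoeff_le {z : ℝ} (hz0 : 0 < z) (hz1 : z < 1)
    (hq0 : 0 < q) (hq1 : q < 1) (hq'0 : 0 < q') (hq'1 : q' < 1) :
    -log (bhattacharyyaCoeff q q') ≤ (klBerR z q + klBerR z q') / 2 := by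
  rw [half_klBerR_add_klBerR hz0 hz1 hq0 hq1 hq'0 hq'1]
  linarith [klBerR_nonneg hz0.le hz1.le (bhattacharyyaPoint_pos hq0 hq'0)
    (bhattacharyyaPoint_lt_one hq0 hq'0 hq1 hq'1)]

lemma half_klBerR_add_klBerR_bhattacharyyaPoint
    (hq0 : 0 < q) (hq1 : q < 1) (hq'0 : 0 < q') (hq'1 : q' < 1) :
    (klBerR (bhattacharyyaPoint q q') q + klBerR (bhattacharyyaPoint q q') q') / 2 =
      -log (bhattacharyyaCoeff q q') := by
  rw [half_klBerR_add_klBerR (bhattacharyyaPoint_pos hq0 hq'0)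
    (bhattacharyyaPoint_lt_one hq0 hq'0 hq1 hq'1) hq0 hq1 hq'0 hq'1, klBerR_self, zero_sub]

end Bhattacharyya

/-- For `0 < μ < μ' < 1`:
`D*(μ,μ') ≥ min_{x ∈ [μ,μ']} (D(x,μ)+D(x,μ'))/2`, this minimum equals
`-log(√(μμ') + √((1-μ)(1-μ')))`, and hence `D*(μ,μ') ≥ -log(√(μμ') + √((1-μ)(1-μ')))`. -/
theorem chernoff_ge_bhattacharyya
    (μ μ' : ℝ) (hμ : 0 < μ) (hμμ' : μ < μ') (hμ' : μ' < 1) :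
    chernoffR μ μ' ≥ ⨅ x : Set.Icc μ μ', (klBerR x μ + klBerR x μ') / 2 ∧
    (⨅ x : Set.Icc μ μ', (klBerR x μ + klBerR x μ') / 2) =
      -Real.log (Real.sqrt (μ * μ') + Real.sqrt ((1 - μ) * (1 - μ'))) ∧
    chernoffR μ μ' ≥
      -Real.log (Real.sqrt (μ * μ') + Real.sqrt ((1 - μ) * (1 - μ'))) := by
  have hμ1 : μ < 1 := hμμ'.trans hμ'
  have hμ'0 : 0 < μ' := hμ.trans hμμ'
  have hlow (z : ℝ) (hz : z ∈ Ioo 0 1) :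
      -log (bhattacharyyaCoeff μ μ') ≤ (klBerR z μ + klBerR z μ') / 2 :=
    neg_log_bhattacharyyaCoeff_le hz.1 hz.2 hμ hμ1 hμ'0 hμ'
  have hmin : ⨅ x : Icc μ μ', (klBerR x μ + klBerR x μ') / 2 =
      -log (bhattacharyyaCoeff μ μ') := by
    have hvalue := half_klBerR_add_klBerR_bhattacharyyaPoint hμ hμ1 hμ'0 hμ'
    have hp : bhattacharyyaPoint μ μ' ∈ Icc μ μ' :=
      ⟨le_bhattacharyyaPoint hμ hμμ'.le hμ'.le, bhattacharyyaPoint_le hμ hμμ'.le hμ'.le⟩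
    rw [← hvalue]
    refine IsMinOn.iInf_eq (f := fun x => (klBerR x μ + klBerR x μ') / 2) hp fun x hx => ?_
    exact hvalue.trans_le (hlow x ⟨hμ.trans_le hx.1, hx.2.trans_lt hμ'⟩)
  have : Nonempty (Ioo (0 : ℝ) 1) := (nonempty_Ioo.mpr one_pos).to_subtype
  have hchernoff : -log (bhattacharyyaCoeff μ μ') ≤ chernoffR μ μ' :=
    le_ciInf fun z => (hlow z z.2).trans <| by
      linarith [le_max_left (klBerR z μ) (klBerR z μ'), le_max_right (klBerR z μ) (klBerR z μ')]
  exact ⟨hmin.le.trans hchernoff, hmin, hchernoff⟩
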